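/- arXiv:1106.3759 — 2 statements merged into one kernel-verified Lean document; each statement's English description precedes it below -/
import Mathlib

section
/- If the spectral radius of the Kronecker matrix A⊗A + C⊗C is strictly less than 1, then there exist symmetric matrices H, Θ ∈ ℝ^{n×n} satisfying the Lyapunov equations AᵀHA − H + Θ = 0 and Θ − CᵀHC − G = 0. -/
open Matrix

noncomputable section

theorem lyapunov_equations_solvable_of_mean_square_stability
    {n : ℕ}
    (A C G : Matrix (Fin n) (Fin n) ℝ)
    (hG : G.IsSymm)
    (hstab : ∀ z ∈ spectrum ℂ
      ((Matrix.kroneckerMap (· * ·) A A + Matrix.kroneckerMap (· * ·) C C).map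
        (algebraMap ℝ ℂ)), ‖z‖ < 1) :
    ∃ H Θ : Matrix (Fin n) (Fin n) ℝ, H.IsSymm ∧ Θ.IsSymm ∧
      Aᵀ * H * A - H + Θ = 0 ∧ Θ - Cᵀ * H * C - G = 0 := by
  set N : Matrix (Fin n × Fin n) (Fin n × Fin n) ℂ :=
    (Matrix.kroneckerMap (· * ·) A A + Matrix.kroneckerMap (· * ·) C C).map
      (algebraMap ℝ ℂ) with hN
  set L : Matrix (Fin n) (Fin n) ℝ →ₗ[ℝ] Matrix (Fin n) (Fin n) ℝ :=
    { toFun := fun H => H - Aᵀ * H * A - Cᵀ * H * C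
      map_add' := by
        intro X Y
        simp [Matrix.mul_add, Matrix.add_mul]
        abel
      map_smul' := by
        intro c X
        simp [Matrix.mul_smul, Matrix.smul_mul]
        module } with hL
  have hinj : Function.Injective L := by
    rw [← LinearMap.ker_eq_bot, LinearMap.ker_eq_bot']
    intro H hH
    by_contra hne
    have heq : H = Aᵀ * H * A + Cᵀ * H * C := by
      have : H - Aᵀ * H * A - Cᵀ * H * C = 0 := hH
      linear_combination (norm := abel) this
    set v : Fin n × Fin n → ℂ := fun p => ((H p.1 p.2 : ℝ) : ℂ) with hv
    have hvne : v ≠ 0 := by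
      intro h0
      apply hne
      ext i j
      have := congrFun h0 (i, j)
      simpa [hv] using this
    have hmv : (1 - Nᵀ).mulVec v = 0 := by
      funext p
      obtain ⟨i, j⟩ := p
      have hHij := congrFun (congrFun heq i) j
      simp only [Matrix.add_apply, Matrix.mul_apply, Matrix.transpose_apply,
        Finset.sum_mul] at hHij
      simp only [Matrix.mulVec, Matrix.sub_apply, Matrix.one_apply,
        Matrix.transpose_apply, hN, Matrix.map_apply, Matrix.add_apply,
        Matrix.kroneckerMap_apply, dotProduct, Pi.zero_apply, hv, Complex.coe_algebraMap]
      rw [Fintype.sum_prod_type]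
      push_cast
      have hHC : ((H i j : ℝ) : ℂ) =
          (∑ x : Fin n, ∑ y : Fin n, (A y i : ℂ) * (H y x : ℝ) * (A x j : ℂ)) +
          ∑ x : Fin n, ∑ y : Fin n, (C y i : ℂ) * (H y x : ℝ) * (C x j : ℂ) := by
        exact_mod_cast congrArg (Complex.ofReal) hHij
      simp only [sub_mul, Finset.sum_sub_distrib, ite_mul, one_mul, zero_mul,
        Prod.mk.injEq, ite_and, Finset.sum_ite_eq, Finset.mem_univ, if_true, add_mul]
      rw [sub_eq_zero]
      have e1 : ∑ x : Fin n, ∑ y : Fin n, (A x i : ℂ) * (A y j) * (H x y : ℝ)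
          = ∑ x : Fin n, ∑ y : Fin n, (A y i : ℂ) * (H y x : ℝ) * (A x j) := by
        rw [Finset.sum_comm]
        exact Finset.sum_congr rfl fun _ _ => Finset.sum_congr rfl fun _ _ => by ring
      have e2 : ∑ x : Fin n, ∑ y : Fin n, (C x i : ℂ) * (C y j) * (H x y : ℝ)
          = ∑ x : Fin n, ∑ y : Fin n, (C y i : ℂ) * (H y x : ℝ) * (C x j) := by
        rw [Finset.sum_comm]
        exact Finset.sum_congr rfl fun _ _ => Finset.sum_congr rfl fun _ _ => by ring
      simp only [Finset.sum_add_distrib]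
      rw [show (∑ x : Fin n, ∑ y : Fin n, if i = x then if j = y then ((H x y : ℝ):ℂ) else 0 else 0) = ((H i j : ℝ) : ℂ) by simp]
      rw [e1, e2, ← hHC]
    have hdet : (1 - N).det = 0 := by
      have h1 : (1 - Nᵀ).det = 0 := by
        rw [← Matrix.exists_mulVec_eq_zero_iff]
        exact ⟨v, hvne, hmv⟩
      rw [← Matrix.det_transpose]
      simpa using h1
    have hmem : (1 : ℂ) ∈ spectrum ℂ N := by
      rw [spectrum.mem_iff]
      intro hunit
      rw [Matrix.isUnit_iff_isUnit_det] at hunit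
      simp only [_root_.map_one] at hunit
      rw [isUnit_iff_ne_zero] at hunit
      exact hunit (by simpa using hdet)
    have := hstab 1 hmem
    simp at this
  have hsurj : Function.Surjective L :=
    (LinearMap.injective_iff_surjective).mp hinj
  obtain ⟨H, hH⟩ := hsurj G
  have hHG : H - Aᵀ * H * A - Cᵀ * H * C = G := hH
  have hHsymm : H.IsSymm := by
    have hLT : L Hᵀ = G := by
      show Hᵀ - Aᵀ * Hᵀ * A - Cᵀ * Hᵀ * C = G
      have : (H - Aᵀ * H * A - Cᵀ * H * C)ᵀ = Gᵀ := by rw [hHG]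
      rw [Matrix.IsSymm] at hG
      simp only [Matrix.transpose_sub, Matrix.transpose_mul, Matrix.transpose_transpose] at this
      rw [hG] at this
      rw [← this]
      noncomm_ring
    have := hinj (hLT.trans hH.symm)
    exact this
  refine ⟨H, Cᵀ * H * C + G, hHsymm, ?_, ?_, by abel⟩
  · rw [Matrix.IsSymm] at hHsymm hG ⊢
    simp [Matrix.transpose_add, Matrix.transpose_mul, hHsymm, hG, Matrix.mul_assoc]
  · linear_combination (norm := noncomm_ring) -hHG
end
end

section
/- Let A, C ∈ ℝ^{n×n} and set 𝒜₁ = Aᵀ⊗Aᵀ − I_{n²} and 𝒜₂ = −Cᵀ⊗Cᵀ. If the spectral radius of A⊗A + C⊗C is strictly less than 1, then the 2n² × 2n² block matrix [[𝒜₁, I_{n²}], [𝒜₂, I_{n²}]] is invertible. -/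
open Matrix

noncomputable section

theorem block_matrix_invertible_of_mean_square_stability
    {n : ℕ}
    (A C : Matrix (Fin n) (Fin n) ℝ)
    (hstab : ∀ z ∈ spectrum ℂ
      ((Matrix.kroneckerMap (· * ·) A A + Matrix.kroneckerMap (· * ·) C C).map
        (algebraMap ℝ ℂ)), ‖z‖ < 1) :
    IsUnit (Matrix.fromBlocks
      (Matrix.kroneckerMap (· * ·) Aᵀ Aᵀ - 1) (1 : Matrix (Fin n × Fin n) (Fin n × Fin n) ℝ)
      (-(Matrix.kroneckerMap (· * ·) Cᵀ Cᵀ)) (1 : Matrix (Fin n × Fin n) (Fin n × Fin n) ℝ)) := by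
  set M : Matrix (Fin n × Fin n) (Fin n × Fin n) ℝ :=
    Matrix.kroneckerMap (· * ·) A A + Matrix.kroneckerMap (· * ·) C C with hM
  -- 1 is not in the spectrum of the complexification of M
  have h1 : (1 : ℂ) ∉ spectrum ℂ (M.map (algebraMap ℝ ℂ)) := by
    intro h
    have := hstab 1 h
    simp at this
  have hunit : IsUnit ((algebraMap ℂ _) (1 : ℂ) - M.map (algebraMap ℝ ℂ)) :=
    spectrum.notMem_iff.mp h1
  have hdetC : ((1 : Matrix (Fin n × Fin n) (Fin n × Fin n) ℂ) - M.map (algebraMap ℝ ℂ)).det ≠ 0 := by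
    have := (Matrix.isUnit_iff_isUnit_det _).mp (by simpa using hunit)
    exact this.ne_zero
  -- transfer to ℝ
  have hdetR : ((1 : Matrix (Fin n × Fin n) (Fin n × Fin n) ℝ) - M).det ≠ 0 := by
    intro h
    apply hdetC
    have : ((1 : Matrix (Fin n × Fin n) (Fin n × Fin n) ℝ) - M).map (algebraMap ℝ ℂ)
        = (1 : Matrix (Fin n × Fin n) (Fin n × Fin n) ℂ) - M.map (algebraMap ℝ ℂ) := by
      ext i j
      by_cases hij : i = j <;> simp [Matrix.map_apply, Matrix.one_apply, hij]
    rw [← this, show (1 - M).map ⇑(algebraMap ℝ ℂ) = (algebraMap ℝ ℂ).mapMatrix (1 - M) from rfl,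
      ← RingHom.map_det, h, map_zero]
  rw [Matrix.isUnit_iff_isUnit_det, Matrix.det_fromBlocks_one₂₂, isUnit_iff_ne_zero]
  have key : Matrix.kroneckerMap (· * ·) Aᵀ Aᵀ - 1 -
      (1 : Matrix (Fin n × Fin n) (Fin n × Fin n) ℝ) * -(Matrix.kroneckerMap (· * ·) Cᵀ Cᵀ)
      = -((1 - M)ᵀ) := by
    rw [hM]
    simp [Matrix.transpose_sub, Matrix.transpose_add, Matrix.kroneckerMap_transpose]
    abel
  rw [key, Matrix.det_neg, Matrix.det_transpose]
  simp [hdetR]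
end
end
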